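/- Let M = (M_0, M_1, M_2, …) be an increasing sequence of positive real numbers with M_0 = 1 that is logarithmically convex, satisfies lim_{j→∞} (M_j)^{1/j} = ∞, and satisfies sup_{j≥1} (M_{j+1}/M_j)^{1/j} < ∞. Then C^ℝ_M(U) is closed under reciprocal: if U ⊆ ℝ^N is open and f ∈ C^ℝ_M(U) satisfies f(x) ≠ 0 for all x ∈ U, then 1/f ∈ C^ℝ_M(U). -/

import Mathlib

/-- The `i`-th partial derivative of a function on Euclidean space. -/
noncomputable def pd {ι : Type} [Fintype ι] [DecidableEq ι] {W : Type} [NormedAddCommGroup W]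
    [NormedSpace ℝ W] (i : ι) (f : EuclideanSpace ℝ ι → W) : EuclideanSpace ℝ ι → W :=
  fun x => fderiv ℝ f x (EuclideanSpace.single i 1)

/-- The multi-index derivative `D^α f`. -/
noncomputable def mderiv {ι : Type} [Fintype ι] [DecidableEq ι] {W : Type} [NormedAddCommGroup W]
    [NormedSpace ℝ W] (α : ι → ℕ) (f : EuclideanSpace ℝ ι → W) : EuclideanSpace ℝ ι → W :=
  (Finset.univ : Finset ι).toList.foldr (fun i g => (pd i)^[α i] g) f

/-- Membership in the real Denjoy-Carleman class `C^ℝ_M(U)`: `f` is `C^∞` on `U` and on every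
compact `K ⊆ U` there are `A, B > 0` with `|(1/α!) D^α f(x)| ≤ A B^{|α|} M_{|α|}`. -/
def CRM {ι : Type} [Fintype ι] [DecidableEq ι] (M : ℕ → ℝ)
    (U : Set (EuclideanSpace ℝ ι)) (f : EuclideanSpace ℝ ι → ℝ) : Prop :=
  ContDiffOn ℝ (⊤ : ℕ∞) f U ∧
  ∀ K : Set (EuclideanSpace ℝ ι), K ⊆ U → IsCompact K →
    ∃ A B : ℝ, 0 < A ∧ 0 < B ∧ ∀ x ∈ K, ∀ α : ι → ℕ,
      (1 / (∏ i, ((α i).factorial : ℝ))) * |mderiv α f x| ≤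
        A * B ^ (∑ i, α i) * M (∑ i, α i)

/-!
Write `g = 1 / f`. Applying the Leibniz rule to `f * g = 1` gives, for every multi-index
`α ≠ 0`, `f · D^α g = - ∑_{0 ≠ β ≤ α} (α choose β) D^β f · D^(α-β) g`. Hence the normalised
derivatives `G α = |D^α g| / α!` satisfy `G α ≤ C ∑_{0 ≠ β ≤ α} F β · G (α - β)` on a compact
set `K` where `|g| ≤ C`, with `F β = |D^β f| / β! ≤ A B^|β| M_|β|`. Log-convexity and `M 0 = 1`
make `M` submultiplicative, `M j * M k ≤ M (j + k)`, and an induction on `α` then yields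
`G α ≤ C B'^|α| M_|α|` with `B' = B / t` (up to the factor `max A 1`), where `t` is so small that
`C ∑_{β ≠ 0} t^|β| ≤ 1`.
-/

open Finset Function
open Set (EqOn)
open scoped ContDiff

section PartialDerivatives

variable {ι : Type} [Fintype ι] [DecidableEq ι] {U : Set (EuclideanSpace ℝ ι)}
  {u v : EuclideanSpace ℝ ι → ℝ} {x : EuclideanSpace ℝ ι}

theorem eqOn_pd (hU : IsOpen U) (h : EqOn u v U) (i : ι) : EqOn (pd i u) (pd i v) U :=
  fun _ hx => by simp only [pd, (Filter.eventuallyEq_of_mem (hU.mem_nhds hx) h).fderiv_eq]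

theorem eqOn_pd_iterate (hU : IsOpen U) (h : EqOn u v U) (i : ι) (k : ℕ) :
    EqOn ((pd i)^[k] u) ((pd i)^[k] v) U := by
  induction k with
  | zero => exact h
  | succ k ih => simpa only [iterate_succ_apply'] using eqOn_pd hU ih i

theorem contDiffOn_pd (hU : IsOpen U) (hu : ContDiffOn ℝ ∞ u U) (i : ι) :
    ContDiffOn ℝ ∞ (pd i u) U :=
  (hu.fderiv_of_isOpen hU (by simp)).clm_apply contDiffOn_const

theorem contDiffOn_pd_iterate (hU : IsOpen U) (hu : ContDiffOn ℝ ∞ u U) (i : ι) (k : ℕ) :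
    ContDiffOn ℝ ∞ ((pd i)^[k] u) U := by
  induction k with
  | zero => exact hu
  | succ k ih => simpa only [iterate_succ_apply'] using contDiffOn_pd hU ih i

theorem pd_const (c : ℝ) (i : ι) : pd i (fun _ : EuclideanSpace ℝ ι => c) = fun _ => 0 := by
  ext; simp [pd]

theorem pd_iterate_const (c : ℝ) (i : ι) {k : ℕ} (hk : k ≠ 0) :
    (pd i)^[k] (fun _ : EuclideanSpace ℝ ι => c) = fun _ => 0 := by
  obtain ⟨k, rfl⟩ := Nat.exists_eq_succ_of_ne_zero hk
  rw [iterate_succ_apply, pd_const]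
  exact iterate_fixed (pd_const 0 i) k

theorem pd_mul (hu : DifferentiableAt ℝ u x) (hv : DifferentiableAt ℝ v x) (i : ι) :
    pd i (fun y => u y * v y) x = pd i u x * v x + u x * pd i v x := by
  simp only [pd, fderiv_fun_mul hu hv, add_apply, smul_apply, smul_eq_mul]
  ring

theorem pd_sum_const_mul {β : Type*} {s : Finset β} {c : β → ℝ}
    {w : β → EuclideanSpace ℝ ι → ℝ} (hw : ∀ b ∈ s, DifferentiableAt ℝ (w b) x) (i : ι) :
    pd i (fun y => ∑ b ∈ s, c b * w b y) x = ∑ b ∈ s, c b * pd i (w b) x := by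
  simp only [pd, fderiv_fun_sum fun b hb => (hw b hb).const_mul (c b),
    FunLike.coe_sum, Finset.sum_apply]
  refine sum_congr rfl fun b hb => ?_
  simp [fderiv_const_mul (hw b hb)]

theorem pd_iterate_sum_const_mul (hU : IsOpen U) {β : Type*} {s : Finset β} {c : β → ℝ}
    {w : β → EuclideanSpace ℝ ι → ℝ} (hw : ∀ b ∈ s, ContDiffOn ℝ ∞ (w b) U) (i : ι) (k : ℕ) :
    EqOn ((pd i)^[k] fun y => ∑ b ∈ s, c b * w b y)
      (fun y => ∑ b ∈ s, c b * (pd i)^[k] (w b) y) U := by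
  induction k with
  | zero => exact fun _ _ => rfl
  | succ k ih =>
    intro x hx
    simp only [iterate_succ_apply']
    rw [eqOn_pd hU ih i hx, pd_sum_const_mul fun b hb =>
      ((contDiffOn_pd_iterate hU (hw b hb) i k).differentiableOn (by simp)).differentiableAt
        (hU.mem_nhds hx)]

theorem pd_iterate_mul (hU : IsOpen U) (hu : ContDiffOn ℝ ∞ u U) (hv : ContDiffOn ℝ ∞ v U)
    (i : ι) (k : ℕ) :
    EqOn ((pd i)^[k] fun y => u y * v y)
      (fun y => ∑ m ∈ range (k + 1), (k.choose m : ℝ) * ((pd i)^[m] u y * (pd i)^[k - m] v y))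
      U := by
  induction k with
  | zero => intro x _; simp
  | succ k ih =>
    intro x hx
    have hdiff : ∀ {w} (hw : ContDiffOn ℝ ∞ w U) (m : ℕ), DifferentiableAt ℝ ((pd i)^[m] w) x :=
      fun hw m => ((contDiffOn_pd_iterate hU hw i m).differentiableOn (by simp)).differentiableAt
        (hU.mem_nhds hx)
    rw [iterate_succ_apply', eqOn_pd hU ih i hx, pd_sum_const_mul
      (w := fun m y => (pd i)^[m] u y * (pd i)^[k - m] v y)
      fun m _ => (hdiff hu m).mul (hdiff hv (k - m))]
    beta_reduce
    rw [sum_choose_succ_mul (fun m n => (pd i)^[m] u x * (pd i)^[n] v x), ← sum_add_distrib]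
    refine sum_congr rfl fun m hm => ?_
    rw [pd_mul (hdiff hu m) (hdiff hv (k - m)), ← iterate_succ_apply' (pd i),
      ← iterate_succ_apply' (pd i), Nat.succ_eq_add_one, Nat.succ_eq_add_one,
      show k - m + 1 = k + 1 - m by grind]
    ring

end PartialDerivatives

section MultiIndex

variable {ι : Type} [Fintype ι] [DecidableEq ι]

def mchoose (α β : ι → ℕ) : ℕ := ∏ i, (α i).choose (β i)

omit [DecidableEq ι] in
theorem mchoose_zero_right (α : ι → ℕ) : mchoose α 0 = 1 := by
  simp [mchoose]

omit [DecidableEq ι] in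
theorem mchoose_pos {α β : ι → ℕ} (h : β ≤ α) : 0 < mchoose α β :=
  prod_pos fun i _ => Nat.choose_pos (h i)

omit [DecidableEq ι] in
theorem mchoose_mul_prod_factorial {α β : ι → ℕ} (h : β ≤ α) :
    (mchoose α β : ℝ) * ((∏ i, ((β i).factorial : ℝ)) * ∏ i, (((α - β) i).factorial : ℝ)) =
      ∏ i, ((α i).factorial : ℝ) := by
  simp only [mchoose, Nat.cast_prod, ← prod_mul_distrib]
  refine prod_congr rfl fun i _ => ?_
  rw [← mul_assoc]
  exact_mod_cast Nat.choose_mul_factorial_mul_factorial (h i)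

omit [DecidableEq ι] in
theorem sum_ne_zero_of_ne_zero {β : ι → ℕ} (hβ : β ≠ 0) : ∑ i, β i ≠ 0 := fun h =>
  hβ (funext fun i => sum_eq_zero_iff.1 h i (mem_univ i))

omit [DecidableEq ι] in
theorem sum_add_sum_tsub {α β : ι → ℕ} (h : β ≤ α) : ∑ i, β i + ∑ i, (α - β) i = ∑ i, α i := by
  rw [← sum_add_distrib]
  exact sum_congr rfl fun i _ => add_tsub_cancel_of_le (h i)

omit [Fintype ι] [DecidableEq ι] in
theorem tsub_lt_self_of_le_of_ne_zero {α β : ι → ℕ} (h : β ≤ α) (hβ : β ≠ 0) : α - β < α := by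
  refine lt_of_le_of_ne tsub_le_self fun hαβ => hβ (funext fun i => ?_)
  have := congrFun hαβ i
  have := h i
  simp only [Pi.sub_apply, Pi.zero_apply] at *
  omega

theorem mchoose_update {α β : ι → ℕ} {i : ι} (hα : α i = 0) (hβ : β i = 0) (k m : ℕ) :
    mchoose (update α i k) (update β i m) = k.choose m * mchoose α β := by
  simp only [mchoose, ← mul_prod_erase univ _ (mem_univ i), update_self, hα, hβ,
    Nat.choose_self, one_mul]
  congr 1
  exact prod_congr rfl fun j hj => by simp [update_of_ne (ne_of_mem_erase hj)]

theorem sum_Iic_eq_sum_sum_update {R : Type*} [AddCommMonoid R] (α : ι → ℕ) (i : ι)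
    (g : (ι → ℕ) → R) :
    ∑ β ∈ Iic α, g β = ∑ m ∈ range (α i + 1), ∑ β ∈ Iic (update α i 0), g (update β i m) := by
  rw [← sum_product']
  refine sum_nbij' (fun β => (β i, update β i 0)) (fun p => update p.2 i p.1) ?_ ?_ ?_ ?_ ?_
  · intro β hβ
    simp only [mem_Iic, mem_product, mem_range, Pi.le_def] at hβ ⊢
    exact ⟨Nat.lt_succ_of_le (hβ i), fun j => by
      rcases eq_or_ne j i with rfl | hj <;> simp [update_of_ne, *]⟩
  · rintro ⟨m, β⟩ h
    simp only [mem_Iic, mem_product, mem_range, Pi.le_def] at h ⊢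
    intro j
    rcases eq_or_ne j i with rfl | hj
    · simpa using Nat.le_of_lt_succ h.1
    · simpa [update_of_ne hj] using h.2 j
  · intro β _
    simp
  · rintro ⟨m, β⟩ h
    simp only [mem_Iic, mem_product, mem_range, Pi.le_def] at h
    have hβi : β i = 0 := by simpa using h.2 i
    simp [← hβi]
  · intro β _
    simp

theorem sum_Iic_pow_eq_prod {R : Type*} [CommSemiring R] (c : R) (α : ι → ℕ) :
    ∑ β ∈ Iic α, c ^ (∑ i, β i) = ∏ i, ∑ m ∈ range (α i + 1), c ^ m := by
  simp only [prod_univ_sum, ← prod_pow_eq_pow_sum, Nat.range_succ_eq_Iic]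
  rfl

end MultiIndex

section ListDeriv

variable {ι : Type} [Fintype ι] [DecidableEq ι] {U : Set (EuclideanSpace ℝ ι)}
  {u v : EuclideanSpace ℝ ι → ℝ}

noncomputable def listDeriv (L : List ι) (α : ι → ℕ) (u : EuclideanSpace ℝ ι → ℝ) :
    EuclideanSpace ℝ ι → ℝ :=
  L.foldr (fun i g => (pd i)^[α i] g) u

theorem mderiv_eq_listDeriv (α : ι → ℕ) (u : EuclideanSpace ℝ ι → ℝ) :
    mderiv α u = listDeriv univ.toList α u := rfl

@[simp]
theorem listDeriv_nil (α : ι → ℕ) (u : EuclideanSpace ℝ ι → ℝ) : listDeriv [] α u = u := rfl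

@[simp]
theorem listDeriv_cons (i : ι) (L : List ι) (α : ι → ℕ) (u : EuclideanSpace ℝ ι → ℝ) :
    listDeriv (i :: L) α u = (pd i)^[α i] (listDeriv L α u) := rfl

theorem listDeriv_zero (L : List ι) (u : EuclideanSpace ℝ ι → ℝ) : listDeriv L 0 u = u := by
  induction L with
  | nil => rfl
  | cons i L ih => simp [ih]

theorem listDeriv_congr_index {L : List ι} {α β : ι → ℕ} (h : ∀ i ∈ L, α i = β i)
    (u : EuclideanSpace ℝ ι → ℝ) : listDeriv L α u = listDeriv L β u := by
  induction L with
  | nil => rfl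
  | cons i L ih => simp_all

theorem listDeriv_const (L : List ι) (α : ι → ℕ) (c : ℝ) :
    listDeriv L α (fun _ => c) = fun _ => if ∀ i ∈ L, α i = 0 then c else 0 := by
  induction L with
  | nil => simp
  | cons i L ih =>
    rw [listDeriv_cons, ih]
    by_cases hi : α i = 0
    · simp [hi]
    · simp [hi, pd_iterate_const _ i hi]

theorem eqOn_listDeriv (hU : IsOpen U) (h : EqOn u v U) (L : List ι) (α : ι → ℕ) :
    EqOn (listDeriv L α u) (listDeriv L α v) U := by
  induction L with
  | nil => exact h
  | cons i L ih => exact eqOn_pd_iterate hU ih i (α i)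

theorem contDiffOn_listDeriv (hU : IsOpen U) (hu : ContDiffOn ℝ ∞ u U) (L : List ι)
    (α : ι → ℕ) : ContDiffOn ℝ ∞ (listDeriv L α u) U := by
  induction L with
  | nil => exact hu
  | cons i L ih => exact contDiffOn_pd_iterate hU ih i (α i)

theorem listDeriv_cons_update {i : ι} {L : List ι} (hi : i ∉ L) (β : ι → ℕ) (m : ℕ)
    (u : EuclideanSpace ℝ ι → ℝ) :
    listDeriv (i :: L) (update β i m) u = (pd i)^[m] (listDeriv L β u) := by
  rw [listDeriv_cons, update_self,
    listDeriv_congr_index fun j hj => update_of_ne (ne_of_mem_of_not_mem hj hi) m β]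

theorem listDeriv_mul (hU : IsOpen U) (hu : ContDiffOn ℝ ∞ u U) (hv : ContDiffOn ℝ ∞ v U)
    {L : List ι} (hL : L.Nodup) {α : ι → ℕ} (hα : ∀ i ∉ L, α i = 0) :
    EqOn (listDeriv L α fun y => u y * v y)
      (fun y => ∑ β ∈ Iic α, (mchoose α β : ℝ) * (listDeriv L β u y * listDeriv L (α - β) v y))
      U := by
  induction L generalizing α with
  | nil =>
    obtain rfl : α = 0 := funext fun i => hα i List.not_mem_nil
    intro x _
    simp [show Iic (0 : ι → ℕ) = {0} from Iic_bot, mchoose_zero_right]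
  | cons i L ih =>
    obtain ⟨hiL, hL⟩ := List.nodup_cons.1 hL
    have hne : ∀ j ∈ L, j ≠ i := fun j hj h => hiL (h ▸ hj)
    set α₀ := update α i 0
    have hα₀ : ∀ j ∉ L, α₀ j = 0 := fun j hj => by
      rcases eq_or_ne j i with rfl | hji
      · simp [α₀]
      · simpa [α₀, hji] using hα j (by simp [hji, hj])
    have hαα₀ : ∀ j ∈ L, α j = α₀ j := fun j hj => by simp [α₀, hne j hj]
    have hsmooth : ∀ β ∈ Iic α₀, ContDiffOn ℝ ∞
        (fun y => listDeriv L β u y * listDeriv L (α₀ - β) v y) U := fun β _ =>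
      (contDiffOn_listDeriv hU hu L β).mul (contDiffOn_listDeriv hU hv L _)
    intro x hx
    rw [listDeriv_cons, listDeriv_congr_index hαα₀, eqOn_pd_iterate hU (ih hL hα₀) i _ hx,
      pd_iterate_sum_const_mul hU hsmooth i _ hx]
    beta_reduce
    rw [sum_Iic_eq_sum_sum_update α i, sum_comm]
    refine sum_congr rfl fun β hβ => ?_
    have hβi : β i = 0 := by simpa [α₀] using (mem_Iic.1 hβ) i
    rw [pd_iterate_mul hU (contDiffOn_listDeriv hU hu L β) (contDiffOn_listDeriv hU hv L _) i _ hx,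
      mul_sum]
    refine sum_congr rfl fun m _ => ?_
    have hchoose : mchoose α (update β i m) = (α i).choose m * mchoose α₀ β := by
      have h := mchoose_update (α := α₀) (by simp [α₀]) hβi (α i) m
      rwa [show update α₀ i (α i) = α by simp [α₀]] at h
    have hsub : α - update β i m = update (α₀ - β) i (α i - m) := by
      ext j
      rcases eq_or_ne j i with rfl | hji <;> simp [α₀, update_of_ne, *]
    rw [hchoose, hsub, listDeriv_cons_update hiL, listDeriv_cons_update hiL]
    push_cast
    ring

end ListDeriv

section Reciprocal

variable {ι : Type} [Fintype ι] [DecidableEq ι] {U : Set (EuclideanSpace ℝ ι)}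
  {f u v : EuclideanSpace ℝ ι → ℝ}

theorem mderiv_zero (u : EuclideanSpace ℝ ι → ℝ) : mderiv 0 u = u :=
  listDeriv_zero _ u

theorem mderiv_const {α : ι → ℕ} (hα : α ≠ 0) (c : ℝ) :
    mderiv α (fun _ => c) = fun _ => 0 := by
  have : ¬∀ i, α i = 0 := fun h => hα (funext h)
  simp [mderiv_eq_listDeriv, listDeriv_const, this]

theorem mderiv_mul (hU : IsOpen U) (hu : ContDiffOn ℝ ∞ u U) (hv : ContDiffOn ℝ ∞ v U)
    (α : ι → ℕ) :
    EqOn (mderiv α fun y => u y * v y)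
      (fun y => ∑ β ∈ Iic α, (mchoose α β : ℝ) * (mderiv β u y * mderiv (α - β) v y)) U :=
  listDeriv_mul hU hu hv (nodup_toList _) fun i hi => absurd (mem_toList.2 (mem_univ i)) hi

theorem mul_mderiv_one_div (hU : IsOpen U) (hf : ContDiffOn ℝ ∞ f U)
    (hne : ∀ x ∈ U, f x ≠ 0) {α : ι → ℕ} (hα : α ≠ 0) {x : EuclideanSpace ℝ ι} (hx : x ∈ U) :
    f x * mderiv α (fun y => 1 / f y) x =
      -∑ β ∈ (Iic α).erase 0,
        (mchoose α β : ℝ) * (mderiv β f x * mderiv (α - β) (fun y => 1 / f y) x) := by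
  have hone : EqOn (fun y => f y * (1 / f y)) (fun _ => 1) U :=
    fun y hy => mul_one_div_cancel (hne y hy)
  have hinv : ContDiffOn ℝ ∞ (fun y => 1 / f y) U := contDiffOn_const.div hf hne
  have hsum : ∑ β ∈ Iic α, (mchoose α β : ℝ) * (mderiv β f x * mderiv (α - β) _ x) =
      mderiv α (fun _ => 1) x :=
    (mderiv_mul hU hf hinv α hx).symm.trans (eqOn_listDeriv hU hone _ α hx)
  rw [← add_sum_erase _ _ (mem_Iic.2 zero_le), mderiv_const hα] at hsum
  simp only [mchoose_zero_right, mderiv_zero, tsub_zero, Nat.cast_one, one_mul] at hsum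
  linarith

noncomputable def scaledDeriv (α : ι → ℕ) (u : EuclideanSpace ℝ ι → ℝ) (x : EuclideanSpace ℝ ι) :
    ℝ :=
  1 / (∏ i, ((α i).factorial : ℝ)) * |mderiv α u x|

theorem scaledDeriv_nonneg (α : ι → ℕ) (u : EuclideanSpace ℝ ι → ℝ) (x : EuclideanSpace ℝ ι) :
    0 ≤ scaledDeriv α u x := by
  unfold scaledDeriv
  positivity

theorem scaledDeriv_one_div_le (hU : IsOpen U) (hf : ContDiffOn ℝ ∞ f U)
    (hne : ∀ x ∈ U, f x ≠ 0) {α : ι → ℕ} (hα : α ≠ 0) {x : EuclideanSpace ℝ ι} (hx : x ∈ U) :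
    scaledDeriv α (fun y => 1 / f y) x ≤
      |1 / f x| * ∑ β ∈ (Iic α).erase 0,
        scaledDeriv β f x * scaledDeriv (α - β) (fun y => 1 / f y) x := by
  set g := fun y => 1 / f y
  have hg : mderiv α g x = 1 / f x * -∑ β ∈ (Iic α).erase 0,
      (mchoose α β : ℝ) * (mderiv β f x * mderiv (α - β) g x) := by
    rw [← mul_mderiv_one_div hU hf hne hα hx, ← mul_assoc, one_div_mul_cancel (hne x hx),
      one_mul]
  have hterm : ∀ β ∈ (Iic α).erase 0,
      1 / (∏ i, ((α i).factorial : ℝ)) *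
          |(mchoose α β : ℝ) * (mderiv β f x * mderiv (α - β) g x)| =
        scaledDeriv β f x * scaledDeriv (α - β) g x := fun β hβ => by
    have hβα := mem_Iic.1 (mem_of_mem_erase hβ)
    have hc : (0 : ℝ) < mchoose α β := Nat.cast_pos.2 (mchoose_pos hβα)
    rw [← mchoose_mul_prod_factorial hβα, abs_mul, abs_mul, abs_of_pos hc]
    unfold scaledDeriv
    field_simp
  calc scaledDeriv α g x
      = |1 / f x| * (1 / (∏ i, ((α i).factorial : ℝ)) * |∑ β ∈ (Iic α).erase 0,
          (mchoose α β : ℝ) * (mderiv β f x * mderiv (α - β) g x)|) := by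
        rw [scaledDeriv, hg, abs_mul, abs_neg]
        ring
    _ ≤ |1 / f x| * ∑ β ∈ (Iic α).erase 0, 1 / (∏ i, ((α i).factorial : ℝ)) *
          |(mchoose α β : ℝ) * (mderiv β f x * mderiv (α - β) g x)| := by
        rw [← mul_sum]
        gcongr
        exact abs_sum_le_sum_abs _ _
    _ = _ := by rw [sum_congr rfl hterm]

end Reciprocal

section Estimates

theorem mul_le_add_of_logConvex {M : ℕ → ℝ} (hpos : ∀ j, 0 < M j) (hM0 : M 0 = 1)
    (hlog : ∀ j : ℕ, M (j + 1) / M j ≤ M (j + 2) / M (j + 1)) (j k : ℕ) :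
    M j * M k ≤ M (j + k) := by
  have hratio : Monotone fun j => M (j + 1) / M j := monotone_nat_of_le_succ hlog
  induction k with
  | zero => simp [hM0]
  | succ k ih =>
    calc M j * M (k + 1) = M j * M k * (M (k + 1) / M k) := by field_simp [(hpos k).ne']
      _ ≤ M (j + k) * (M (j + k + 1) / M (j + k)) :=
        mul_le_mul ih (hratio (Nat.le_add_left k j)) (div_pos (hpos _) (hpos _)).le (hpos _).le
      _ = M (j + (k + 1)) := mul_div_cancel₀ _ (hpos _).ne'

theorem mul_pow_le_max_one_mul_pow (A : ℝ) {B : ℝ} (hB : 0 ≤ B) {k : ℕ} (hk : k ≠ 0) :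
    A * B ^ k ≤ (max A 1 * B) ^ k := by
  rw [mul_pow]
  gcongr
  exact (le_max_left A 1).trans (le_self_pow₀ (le_max_right A 1) hk)

theorem pow_le_two_mul_mul_half_pow {t : ℝ} (ht0 : 0 ≤ t) (ht : t ≤ 1 / 2) {n : ℕ}
    (hn : n ≠ 0) : t ^ n ≤ 2 * t * (1 / 2) ^ n := by
  obtain ⟨n, rfl⟩ := Nat.exists_eq_succ_of_ne_zero hn
  calc t ^ (n + 1) = t * t ^ n := pow_succ' t n
    _ ≤ t * (1 / 2) ^ n := by gcongr
    _ = 2 * t * (1 / 2) ^ (n + 1) := by ring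

variable {ι : Type} [Fintype ι] [DecidableEq ι]

theorem sum_erase_zero_pow_le {t : ℝ} (ht0 : 0 ≤ t) (ht : t ≤ 1 / 2) (α : ι → ℕ) :
    ∑ β ∈ (Iic α).erase 0, t ^ (∑ i, β i) ≤ 2 ^ (Fintype.card ι + 1) * t := by
  calc ∑ β ∈ (Iic α).erase 0, t ^ (∑ i, β i)
      ≤ ∑ β ∈ (Iic α).erase 0, 2 * t * (1 / 2) ^ (∑ i, β i) :=
        sum_le_sum fun β hβ =>
          pow_le_two_mul_mul_half_pow ht0 ht (sum_ne_zero_of_ne_zero (ne_of_mem_erase hβ))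
    _ ≤ ∑ β ∈ Iic α, 2 * t * (1 / 2 : ℝ) ^ (∑ i, β i) :=
        sum_le_sum_of_subset_of_nonneg (erase_subset _ _) fun _ _ _ => by positivity
    _ = 2 * t * ∏ i, ∑ m ∈ range (α i + 1), (1 / 2 : ℝ) ^ m := by
        rw [← mul_sum, sum_Iic_pow_eq_prod]
    _ ≤ 2 * t * ∏ _i : ι, (2 : ℝ) := by
        gcongr with i
        exact sum_geometric_two_le _
    _ = 2 ^ (Fintype.card ι + 1) * t := by
        rw [prod_const, card_univ, pow_succ]
        ring

theorem mul_le_pow_mul_of_le_of_le {M : ℕ → ℝ} (hpos : ∀ j, 0 < M j)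
    (hsub : ∀ j k, M j * M k ≤ M (j + k)) {A B C t a b : ℝ} (hB : 0 ≤ B) (hC : 0 ≤ C) (ht : 0 < t)
    {j k : ℕ} (hj : j ≠ 0) (ha : a ≤ A * B ^ j * M j) (hb0 : 0 ≤ b)
    (hb : b ≤ C * (max A 1 * B / t) ^ k * M k) :
    a * b ≤ t ^ j * (C * (max A 1 * B / t) ^ (j + k) * M (j + k)) := by
  set B' := max A 1 * B / t
  have hA : A * B ^ j * M j ≤ (t * B') ^ j * M j := by
    rw [mul_div_cancel₀ _ ht.ne']
    exact mul_le_mul_of_nonneg_right (mul_pow_le_max_one_mul_pow A hB hj) (hpos j).le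
  calc a * b ≤ ((t * B') ^ j * M j) * (C * B' ^ k * M k) :=
        mul_le_mul (ha.trans hA) hb hb0 (mul_nonneg (by positivity) (hpos j).le)
    _ = t ^ j * C * B' ^ (j + k) * (M j * M k) := by
        rw [pow_add, mul_pow]
        ring
    _ ≤ t ^ j * C * B' ^ (j + k) * M (j + k) := by
        gcongr
        exact hsub j k
    _ = t ^ j * (C * B' ^ (j + k) * M (j + k)) := by ring

theorem exists_bound_of_le_sum_mul {M : ℕ → ℝ} (hpos : ∀ j, 0 < M j) (hM0 : M 0 = 1)
    (hsub : ∀ j k, M j * M k ≤ M (j + k)) (A : ℝ) {B C : ℝ} (hB : 0 < B) (hC : 1 ≤ C) :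
    ∃ B' > 0, ∀ F G : (ι → ℕ) → ℝ,
      (∀ β, F β ≤ A * B ^ (∑ i, β i) * M (∑ i, β i)) → (∀ α, 0 ≤ G α) → G 0 ≤ C →
      (∀ α ≠ 0, G α ≤ C * ∑ β ∈ (Iic α).erase 0, F β * G (α - β)) →
      ∀ α, G α ≤ C * B' ^ (∑ i, α i) * M (∑ i, α i) := by
  -- `t` is small enough that `C * ∑_{β ≠ 0} t ^ |β| ≤ 1`, see `sum_erase_zero_pow_le`.
  set t : ℝ := 1 / (2 ^ (Fintype.card ι + 1) * C)
  have ht0 : 0 < t := by positivity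
  have ht : t ≤ 1 / 2 := by
    have h2 : (2 : ℝ) ≤ 2 ^ (Fintype.card ι + 1) := le_self_pow₀ one_le_two (by omega)
    have : (2 : ℝ) ≤ 2 ^ (Fintype.card ι + 1) * C := by nlinarith
    exact one_div_le_one_div_of_le two_pos this
  have hCt : C * (2 ^ (Fintype.card ι + 1) * t) = 1 := by
    simp only [t]
    field_simp
  set B' := max A 1 * B / t
  refine ⟨B', by positivity, fun F G hF hG hG0 hrec α => ?_⟩
  induction α using WellFoundedLT.induction with
  | _ α ih =>
  rcases eq_or_ne α 0 with rfl | hα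
  · simpa [hM0] using hG0
  set n := ∑ i, α i
  have hterm : ∀ β ∈ (Iic α).erase 0,
      F β * G (α - β) ≤ t ^ (∑ i, β i) * (C * B' ^ n * M n) := by
    intro β hβ
    have hβα : β ≤ α := mem_Iic.1 (mem_of_mem_erase hβ)
    have hβ0 : β ≠ 0 := ne_of_mem_erase hβ
    have := mul_le_pow_mul_of_le_of_le hpos hsub hB.le (by linarith) ht0
      (sum_ne_zero_of_ne_zero hβ0) (hF β) (hG _) (ih _ (tsub_lt_self_of_le_of_ne_zero hβα hβ0))
    rwa [sum_add_sum_tsub hβα] at this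
  calc G α ≤ C * ∑ β ∈ (Iic α).erase 0, F β * G (α - β) := hrec α hα
    _ ≤ C * ∑ β ∈ (Iic α).erase 0, t ^ (∑ i, β i) * (C * B' ^ n * M n) :=
        mul_le_mul_of_nonneg_left (sum_le_sum hterm) (by linarith)
    _ = C * (∑ β ∈ (Iic α).erase 0, t ^ (∑ i, β i)) * (C * B' ^ n * M n) := by
        rw [← sum_mul]
        ring
    _ ≤ C * (2 ^ (Fintype.card ι + 1) * t) * (C * B' ^ n * M n) := by
        have := hpos n
        gcongr
        exact sum_erase_zero_pow_le ht0.le ht α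
    _ = C * B' ^ n * M n := by rw [hCt, one_mul]

end Estimates

theorem stmt9_general {N : ℕ} (M : ℕ → ℝ)
    (hpos : ∀ j, 0 < M j) (hM0 : M 0 = 1)
    (hlog : ∀ j : ℕ, M (j+1) / M j ≤ M (j+2) / M (j+1))
    (U : Set (EuclideanSpace ℝ (Fin N))) (hUopen : IsOpen U)
    (f : EuclideanSpace ℝ (Fin N) → ℝ) (hf : CRM M U f)
    (hne : ∀ x ∈ U, f x ≠ 0) :
    CRM M U (fun x => 1 / f x) := by
  obtain ⟨hfsmooth, hfbound⟩ := hf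
  refine ⟨contDiffOn_const.div hfsmooth hne, fun K hKU hK => ?_⟩
  obtain ⟨A, B, -, hB, hfK⟩ := hfbound K hKU hK
  obtain ⟨C, hC⟩ := hK.exists_bound_of_continuousOn
    ((continuousOn_const.div hfsmooth.continuousOn hne).mono hKU)
  obtain ⟨B', hB', hbound⟩ := exists_bound_of_le_sum_mul (ι := Fin N) hpos hM0
    (mul_le_add_of_logConvex hpos hM0 hlog) A hB (le_max_right C 1)
  refine ⟨max C 1, B', by positivity, hB', fun x hx => ?_⟩
  have hCx : |1 / f x| ≤ max C 1 := (hC x hx).trans (le_max_left C 1)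
  refine hbound (scaledDeriv · f x) (scaledDeriv · (fun y => 1 / f y) x) (hfK x hx)
    (scaledDeriv_nonneg · _ x) (by simpa [scaledDeriv, mderiv_zero] using hCx) fun α hα => ?_
  exact (scaledDeriv_one_div_le hUopen hfsmooth hne hα (hKU hx)).trans
    (mul_le_mul_of_nonneg_right hCx
      (sum_nonneg fun β _ => mul_nonneg (scaledDeriv_nonneg _ _ _) (scaledDeriv_nonneg _ _ _)))

/-- `C^ℝ_M(U)` is closed under reciprocal. -/
theorem stmt9 {N : ℕ} (M : ℕ → ℝ)
    (hpos : ∀ j, 0 < M j) (hmono : Monotone M) (hM0 : M 0 = 1)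
    (hlog : ∀ j : ℕ, M (j+1) / M j ≤ M (j+2) / M (j+1))
    (hgrow : Filter.Tendsto (fun j : ℕ => M j ^ ((1 : ℝ) / j)) Filter.atTop Filter.atTop)
    (hder : ∃ C : ℝ, ∀ j : ℕ, 1 ≤ j → (M (j+1) / M j) ^ ((1 : ℝ) / j) ≤ C)
    (U : Set (EuclideanSpace ℝ (Fin N))) (hUopen : IsOpen U)
    (f : EuclideanSpace ℝ (Fin N) → ℝ) (hf : CRM M U f)
    (hne : ∀ x ∈ U, f x ≠ 0) :
    CRM M U (fun x => 1 / f x) :=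
  stmt9_general M hpos hM0 hlog U hUopen f hf hne
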